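/- There exists a constant C > 0 such that for every integrable g : (0,∞) → ℝ with ∫_{1/2}^∞ |g(t)| log(3t) dt < ∞, one has ∫₁^∞ | ∫_{x + 1/2}^{3x/2} t g(t)/(x² − t²) dt | dx ≤ C ∫_{1/2}^∞ |g(t)| log(3t) dt. -/

import Mathlib

/-!
Take `C = 1`. Bounding the inner integral by the integral of `|t g(t)/(x² - t²)|` and swapping
the order of integration (Tonelli), it suffices that for each fixed `t` the kernel has `x`-integral
at most `log (3t)`. The condition `x + 1/2 ≤ t ≤ 3x/2` means `2t/3 ≤ x ≤ t - 1/2`, and there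
`t/(t² - x²)` has antiderivative `(log (t + x) - log (t - x))/2`, so the `x`-integral is at most
`log (4t - 1)/2 ≤ log (3t)`.
-/

open MeasureTheory Real Set

theorem integral_div_sq_sub_sq {t a b : ℝ} (hab : a ≤ b) (ha : -t < a) (hb : b < t) :
    ∫ x in a..b, t / (t ^ 2 - x ^ 2)
      = ((log (t + b) - log (t - b)) - (log (t + a) - log (t - a))) / 2 := by
  have hderiv : ∀ x ∈ uIcc a b,
      HasDerivAt (fun x => (log (t + x) - log (t - x)) / 2) (t / (t ^ 2 - x ^ 2)) x := by
    intro x hx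
    rw [uIcc_of_le hab] at hx
    have hplus : 0 < t + x := by linarith [hx.1]
    have hminus : 0 < t - x := by linarith [hx.2]
    have := ((((hasDerivAt_id x).const_add t).log hplus.ne').sub
      (((hasDerivAt_id x).const_sub t).log hminus.ne')).div_const 2
    refine this.congr_deriv ?_
    simp only [id_eq, sq_sub_sq]
    field_simp
    ring
  have hcont : ContinuousOn (fun x => t / (t ^ 2 - x ^ 2)) (uIcc a b) := by
    refine continuousOn_const.div (by fun_prop) fun x hx => ?_
    rw [uIcc_of_le hab] at hx
    nlinarith [hx.1, hx.2]
  rw [intervalIntegral.integral_eq_sub_of_hasDerivAt hderiv hcont.intervalIntegrable]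
  ring

theorem integral_div_sq_sub_sq_le_log {t : ℝ} (ht : 3 / 2 ≤ t) :
    ∫ x in 2 * t / 3..t - 1 / 2, t / (t ^ 2 - x ^ 2) ≤ log (3 * t) := by
  rw [integral_div_sq_sub_sq (by linarith) (by linarith) (by linarith)]
  have hlower : log (t - 2 * t / 3) ≤ log (t + 2 * t / 3) :=
    log_le_log (by linarith) (by linarith)
  have hupper : log (t + (t - 1 / 2)) - log (t - (t - 1 / 2)) ≤ 2 * log (3 * t) := by
    rw [← log_div (by linarith) (by norm_num), two_mul,
      ← log_mul (by positivity) (by positivity)]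
    exact log_le_log (by norm_num; linarith) (by norm_num; nlinarith)
  linarith

theorem integral_norm_integral_smul_le {α β E : Type*} [MeasurableSpace α]
    [MeasurableSpace β] [NormedAddCommGroup E] [NormedSpace ℝ E] {μ : Measure α}
    {ν : Measure β} [SFinite μ] [SFinite ν] {K : α → β → ℝ} {g : β → E} {w : β → ℝ}
    (hK : Measurable (Function.uncurry K)) (hg : AEStronglyMeasurable g ν)
    (hKw : ∀ᵐ t ∂ν, ∫⁻ x, ‖K x t‖ₑ ∂μ ≤ ENNReal.ofReal (w t))
    (hw : 0 ≤ᵐ[ν] w) (hgw : Integrable (fun t => ‖g t‖ * w t) ν) :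
    ∫ x, ‖∫ t, K x t • g t ∂ν‖ ∂μ ≤ ∫ t, ‖g t‖ * w t ∂ν := by
  have hbound : ∫⁻ x, ‖∫ t, K x t • g t ∂ν‖ₑ ∂μ
      ≤ ENNReal.ofReal (∫ t, ‖g t‖ * w t ∂ν) := calc
    _ ≤ ∫⁻ x, ∫⁻ t, ‖K x t‖ₑ * ‖g t‖ₑ ∂ν ∂μ := lintegral_mono fun x => by
        simpa only [enorm_smul] using enorm_integral_le_lintegral_enorm (fun t => K x t • g t)
    _ = ∫⁻ t, ∫⁻ x, ‖K x t‖ₑ * ‖g t‖ₑ ∂μ ∂ν :=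
        lintegral_lintegral_swap (hK.enorm.aemeasurable.mul hg.enorm.comp_snd)
    _ = ∫⁻ t, (∫⁻ x, ‖K x t‖ₑ ∂μ) * ‖g t‖ₑ ∂ν := by
        simp_rw [lintegral_mul_const _ hK.of_uncurry_right.enorm]
    _ ≤ ∫⁻ t, ENNReal.ofReal (‖g t‖ * w t) ∂ν := lintegral_mono_ae <| by
        filter_upwards [hKw] with t ht
        rw [ENNReal.ofReal_mul (norm_nonneg _), ofReal_norm, mul_comm]
        gcongr
    _ = ENNReal.ofReal (∫ t, ‖g t‖ * w t ∂ν) := by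
        refine (ofReal_integral_eq_lintegral_ofReal hgw ?_).symm
        filter_upwards [hw] with t ht
        exact mul_nonneg (norm_nonneg _) ht
  calc ∫ x, ‖∫ t, K x t • g t ∂ν‖ ∂μ
      ≤ ‖∫ x, ‖∫ t, K x t • g t ∂ν‖ ∂μ‖ := Real.le_norm_self _
    _ ≤ (∫⁻ x, ‖∫ t, K x t • g t ∂ν‖ₑ ∂μ).toReal := by
        simpa only [norm_norm, ofReal_norm] using
          norm_integral_le_lintegral_norm (μ := μ) fun x => ‖∫ t, K x t • g t ∂ν‖
    _ ≤ ∫ t, ‖g t‖ * w t ∂ν := by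
        refine ENNReal.toReal_le_of_le_ofReal (integral_nonneg_of_ae ?_) hbound
        filter_upwards [hw] with t ht
        exact mul_nonneg (norm_nonneg _) ht

noncomputable def rightMiddleKernel (x t : ℝ) : ℝ :=
  (Icc (x + 1 / 2) (3 / 2 * x)).indicator (fun s => s / (x ^ 2 - s ^ 2)) t

theorem measurable_uncurry_rightMiddleKernel :
    Measurable (Function.uncurry rightMiddleKernel) := by
  unfold rightMiddleKernel
  simp only [Function.uncurry_def, indicator_apply, mem_Icc]
  have hS : MeasurableSet ({p : ℝ × ℝ | p.1 + 1 / 2 ≤ p.2} ∩ {p | p.2 ≤ 3 / 2 * p.1}) :=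
    (measurableSet_le (by fun_prop) (by fun_prop)).inter
      (measurableSet_le (by fun_prop) (by fun_prop))
  exact Measurable.ite hS (by fun_prop) measurable_const

theorem enorm_rightMiddleKernel (x t : ℝ) :
    ‖rightMiddleKernel x t‖ₑ = (Icc (2 * t / 3) (t - 1 / 2)).indicator
      (fun x => ENNReal.ofReal (t / (t ^ 2 - x ^ 2))) x := by
  have hmem : t ∈ Icc (x + 1 / 2) (3 / 2 * x) ↔ x ∈ Icc (2 * t / 3) (t - 1 / 2) := by
    simp only [mem_Icc]
    constructor <;> rintro ⟨h₁, h₂⟩ <;> constructor <;> linarith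
  by_cases hx : x ∈ Icc (2 * t / 3) (t - 1 / 2)
  · rw [rightMiddleKernel, indicator_of_mem (hmem.2 hx), indicator_of_mem hx,
      ← ofReal_norm, Real.norm_eq_abs, ← neg_sub, div_neg, abs_neg,
      abs_of_pos (div_pos (by linarith [hx.1, hx.2]) (by nlinarith [hx.1, hx.2]))]
  · rw [rightMiddleKernel, indicator_of_notMem (mt hmem.1 hx), indicator_of_notMem hx,
      enorm_zero]

theorem lintegral_enorm_rightMiddleKernel_le (t : ℝ) :
    ∫⁻ x, ‖rightMiddleKernel x t‖ₑ ≤ ENNReal.ofReal (log (3 * t)) := by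
  simp_rw [enorm_rightMiddleKernel, lintegral_indicator measurableSet_Icc]
  rcases lt_or_ge t (3 / 2) with ht | ht
  · rw [Icc_eq_empty (by linarith), Measure.restrict_empty, lintegral_zero_measure]
    exact zero_le
  have hpos : ∀ x ∈ Icc (2 * t / 3) (t - 1 / 2), 0 < t ^ 2 - x ^ 2 := fun x hx => by
    nlinarith [hx.1, hx.2]
  have hint : IntegrableOn (fun x => t / (t ^ 2 - x ^ 2)) (Icc (2 * t / 3) (t - 1 / 2)) :=
    (continuousOn_const.div (by fun_prop) fun x hx => (hpos x hx).ne').integrableOn_Icc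
  rw [← ofReal_integral_eq_lintegral_ofReal hint, integral_Icc_eq_integral_Ioc,
    ← intervalIntegral.integral_of_le (by linarith)]
  · exact ENNReal.ofReal_le_ofReal (integral_div_sq_sub_sq_le_log ht)
  · exact (ae_restrict_iff' measurableSet_Icc).2 <| ae_of_all _ fun x hx =>
      div_nonneg (by linarith) (hpos x hx).le

theorem setIntegral_Icc_eq_integral_rightMiddleKernel_smul {x : ℝ} (hx : 0 < x) (g : ℝ → ℝ) :
    ∫ t in Icc (x + 1 / 2) (3 / 2 * x), t * g t / (x ^ 2 - t ^ 2)
      = ∫ t in Ioi (1 / 2), rightMiddleKernel x t • g t := by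
  have hsub : Icc (x + 1 / 2) (3 / 2 * x) ⊆ Ioi (1 / 2) := fun t ht => by
    simp only [mem_Ioi]; linarith [ht.1]
  have hpt : ∀ t, rightMiddleKernel x t • g t
      = (Icc (x + 1 / 2) (3 / 2 * x)).indicator (fun t => t * g t / (x ^ 2 - t ^ 2)) t :=
    fun t => by
      simp only [rightMiddleKernel, indicator_apply, smul_eq_mul]
      split_ifs <;> ring
  simp_rw [hpt, setIntegral_indicator measurableSet_Icc, inter_eq_right.2 hsub]

/-- There is a constant `C > 0` such that for every integrable `g` on `(0,∞)` with
`∫_{1/2}^∞ |g(t)| log(3t) dt < ∞`,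
`∫₁^∞ |∫_{x+1/2}^{3x/2} t g(t)/(x² − t²) dt| dx ≤ C ∫_{1/2}^∞ |g(t)| log(3t) dt`. -/
theorem right_middle_part_log_bound :
    ∃ C : ℝ, 0 < C ∧ ∀ g : ℝ → ℝ, IntegrableOn g (Ioi (0 : ℝ)) →
      IntegrableOn (fun t => |g t| * Real.log (3 * t)) (Ioi (1 / 2 : ℝ)) →
      ∫ x in Ioi (1 : ℝ), |∫ t in Icc (x + 1 / 2) (3 / 2 * x), t * g t / (x ^ 2 - t ^ 2)|
        ≤ C * ∫ t in Ioi (1 / 2 : ℝ), |g t| * Real.log (3 * t) := by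
  refine ⟨1, one_pos, fun g hg hlog => ?_⟩
  have hlog_nonneg : 0 ≤ᵐ[volume.restrict (Ioi (1 / 2))] fun t => log (3 * t) :=
    (ae_restrict_iff' measurableSet_Ioi).2 <| ae_of_all _ fun t ht =>
      log_nonneg (by linarith [mem_Ioi.1 ht])
  calc ∫ x in Ioi (1 : ℝ), |∫ t in Icc (x + 1 / 2) (3 / 2 * x), t * g t / (x ^ 2 - t ^ 2)|
      = ∫ x in Ioi (1 : ℝ), ‖∫ t in Ioi (1 / 2), rightMiddleKernel x t • g t‖ :=
        setIntegral_congr_fun measurableSet_Ioi fun x hx => by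
          rw [setIntegral_Icc_eq_integral_rightMiddleKernel_smul (one_pos.trans hx),
            Real.norm_eq_abs]
    _ ≤ ∫ t in Ioi (1 / 2), ‖g t‖ * log (3 * t) :=
        integral_norm_integral_smul_le measurable_uncurry_rightMiddleKernel
          (hg.mono_set (Ioi_subset_Ioi one_half_pos.le)).aestronglyMeasurable
          (ae_of_all _ fun t => (setLIntegral_le_lintegral _ _).trans
            (lintegral_enorm_rightMiddleKernel_le t))
          hlog_nonneg (by simp_rw [Real.norm_eq_abs]; exact hlog)
    _ = 1 * ∫ t in Ioi (1 / 2 : ℝ), |g t| * log (3 * t) := by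
        simp only [Real.norm_eq_abs, one_mul]
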